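/- arXiv:2509.17020 — 4 statements merged into one kernel-verified Lean document; each statement's English description precedes it below -/
import Mathlib

section
/- The complementary discrete convolution kernel $P^{(m)}_{m-k}$ satisfies the exact summation identity $\sum_{j=k}^{m} P^{(m)}_{m-j} a^{(j)}_{j-k} = 1$ for all $1 \leq k \leq m$. -/
/-- the complementary discrete convolution kernel satisfies the exact
summation identity `∑_{j=k}^m P^(m)_(m-j) a^(j)_(j-k) = 1` for all `1 ≤ k ≤ m`.
Here `a m k` denotes `a^(m)_(m-k)` and `P m k` denotes `P^(m)_(m-k)`. -/
theorem complementary_kernel_sum_identity (M : ℕ) (hM : 0 < M)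
    (a P : ℕ → ℕ → ℝ)
    (ha_pos : ∀ m k, 1 ≤ k → k ≤ m → m ≤ M → 0 < a m k)
    (ha_mono : ∀ j k, 1 ≤ k → k + 1 ≤ j → j ≤ M → a j k ≤ a j (k + 1))
    (hP0 : ∀ m, 1 ≤ m → m ≤ M → P m m = 1 / a m m)
    (hPrec : ∀ m k, 1 ≤ k → k ≤ m - 1 → m ≤ M →
      P m k = (1 / a k k) * ∑ j ∈ Finset.Icc (k + 1) m, (a j (k + 1) - a j k) * P m j) :
    ∀ m k, 1 ≤ k → k ≤ m → m ≤ M →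
      ∑ j ∈ Finset.Icc k m, P m j * a j k = 1 := by
  intro m
  suffices H : ∀ d k, 1 ≤ k → k ≤ m → m ≤ M → m - k = d →
      ∑ j ∈ Finset.Icc k m, P m j * a j k = 1 by
    intro k hk hkm hmM
    exact H (m - k) k hk hkm hmM rfl
  intro d
  induction d with
  | zero =>
    intro k hk hkm hmM hd
    have hkm' : k = m := le_antisymm hkm (Nat.le_of_sub_eq_zero hd)
    subst hkm'
    rw [Finset.Icc_self, Finset.sum_singleton, hP0 k hk hmM]
    field_simp [ne_of_gt (ha_pos k k hk le_rfl hmM)]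
  | succ d ih =>
    intro k hk hkm hmM hd
    have hklt : k < m := by omega
    have hak : a k k ≠ 0 := ne_of_gt (ha_pos k k hk le_rfl (le_trans hkm hmM))
    have hsplit : Finset.Icc k m = insert k (Finset.Icc (k + 1) m) := by
      rw [Finset.Icc_add_one_left_eq_Ioc, Finset.Ioc_insert_left hkm]
    rw [hsplit, Finset.sum_insert (by simp)]
    rw [hPrec m k hk (by omega) hmM]
    have hih := ih (k + 1) (by omega) hklt hmM (by omega)
    calc 1 / a k k * (∑ j ∈ Finset.Icc (k + 1) m, (a j (k + 1) - a j k) * P m j) * a k k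
          + ∑ j ∈ Finset.Icc (k + 1) m, P m j * a j k
        = ∑ j ∈ Finset.Icc (k + 1) m, ((a j (k + 1) - a j k) * P m j + P m j * a j k) := by
          rw [Finset.sum_add_distrib]
          field_simp
      _ = ∑ j ∈ Finset.Icc (k + 1) m, P m j * a j (k + 1) := by
          apply Finset.sum_congr rfl
          intro j _
          ring
      _ = 1 := hih
end

section
/- The complementary discrete convolution kernel satisfies $0 < P^{(m)}_{m-k} \leq \Gamma(2-\alpha)\, \tau_k^{\alpha}$ for all $1 \leq k \leq m$. -/
/-- Power kernel `β_ν(t) = t^(ν-1)/Γ(ν)`. -/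
noncomputable def betaKer (ν t : ℝ) : ℝ := t ^ (ν - 1) / Real.Gamma ν

/-- the complementary discrete convolution kernel built from the
nonuniform L1 coefficients satisfies `0 < P^(m)_(m-k) ≤ Γ(2-α) τ_k^α` for `1 ≤ k ≤ m`.
Here `a m k` denotes `a^(m)_(m-k)` and `P m k` denotes `P^(m)_(m-k)`. -/
theorem complementary_kernel_bounds (α : ℝ) (hα : 0 < α) (hα1 : α < 1)
    (M : ℕ) (hM : 0 < M) (t : ℕ → ℝ) (ht0 : t 0 = 0)
    (htmono : ∀ j, j < M → t j < t (j + 1))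
    (a P : ℕ → ℕ → ℝ)
    (ha : ∀ m k, 1 ≤ k → k ≤ m → m ≤ M →
      a m k = (betaKer (2 - α) (t m - t (k - 1)) - betaKer (2 - α) (t m - t k))
                / (t k - t (k - 1)))
    (hP0 : ∀ m, 1 ≤ m → m ≤ M → P m m = 1 / a m m)
    (hPrec : ∀ m k, 1 ≤ k → k ≤ m - 1 → m ≤ M →
      P m k = (1 / a k k) * ∑ j ∈ Finset.Icc (k + 1) m, (a j (k + 1) - a j k) * P m j) :
    ∀ m k, 1 ≤ k → k ≤ m → m ≤ M →
      0 < P m k ∧ P m k ≤ Real.Gamma (2 - α) * (t k - t (k - 1)) ^ α := by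
  have hΓ : 0 < Real.Gamma (2 - α) := Real.Gamma_pos_of_pos (by linarith)
  have h1α : (0:ℝ) < 1 - α := by linarith
  -- strict monotonicity of the mesh
  have htlt : ∀ j, j ≤ M → ∀ i, i < j → t i < t j := by
    intro j
    induction j with
    | zero => omega
    | succ n ih =>
      intro hj i hi
      have h1 : t n < t (n + 1) := htmono n (by omega)
      rcases Nat.lt_succ_iff_lt_or_eq.mp hi with h | h
      · exact (ih (by omega) i h).trans h1
      · subst h; exact h1
  have htle : ∀ i j, i ≤ j → j ≤ M → t i ≤ t j := by
    intro i j hij hjM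
    rcases eq_or_lt_of_le hij with rfl | h
    · exact le_rfl
    · exact (htlt j hjM i h).le
  -- rewritten formula for `a`
  have ha_eq : ∀ j k, 1 ≤ k → k ≤ j → j ≤ M →
      a j k = ((t j - t (k - 1)) ^ (1 - α) - (t j - t k) ^ (1 - α))
                / (t k - t (k - 1)) / Real.Gamma (2 - α) := by
    intro j k hk1 hkj hjM
    rw [ha j k hk1 hkj hjM]
    unfold betaKer
    rw [show (2 - α - 1 : ℝ) = 1 - α by ring]
    rw [div_sub_div_same, div_right_comm]
  have hτpos : ∀ k, 1 ≤ k → k ≤ M → (0:ℝ) < t k - t (k - 1) := by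
    intro k hk1 hkM
    have := htlt k hkM (k - 1) (by omega)
    linarith
  -- positivity of `a`
  have ha_pos : ∀ j k, 1 ≤ k → k ≤ j → j ≤ M → 0 < a j k := by
    intro j k hk1 hkj hjM
    rw [ha_eq j k hk1 hkj hjM]
    have hr : (0:ℝ) ≤ t j - t k := by
      have := htle k j hkj hjM; linarith
    have hrs : t j - t k < t j - t (k - 1) := by
      have := htlt k (le_trans hkj hjM) (k - 1) (by omega); linarith
    have hnum : (t j - t k) ^ (1 - α) < (t j - t (k - 1)) ^ (1 - α) :=
      Real.rpow_lt_rpow hr hrs h1α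
    have hτ := hτpos k hk1 (le_trans hkj hjM)
    have : 0 < ((t j - t (k - 1)) ^ (1 - α) - (t j - t k) ^ (1 - α)) / (t k - t (k - 1)) :=
      div_pos (by linarith) hτ
    exact div_pos this hΓ
  -- strict monotonicity `a j k < a j (k+1)`
  have ha_mono : ∀ j k, 1 ≤ k → k + 1 ≤ j → j ≤ M → a j k < a j (k + 1) := by
    intro j k hk1 hkj hjM
    have hjM' := hjM
    rw [ha_eq j k hk1 (by omega) hjM, ha_eq j (k + 1) (by omega) hkj hjM]
    simp only [Nat.add_sub_cancel]
    have hx0 : (0:ℝ) ≤ t j - t (k + 1) := by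
      have := htle (k + 1) j hkj hjM; linarith
    have hxy : t j - t (k + 1) < t j - t k := by
      have := htlt (k + 1) (le_trans hkj hjM) k (by omega); linarith
    have hyz : t j - t k < t j - t (k - 1) := by
      have := htlt k (by omega) (k - 1) (by omega); linarith
    have hz0 : (0:ℝ) ≤ t j - t (k - 1) := le_trans hx0 (by linarith)
    have hslope := (Real.strictConcaveOn_rpow h1α (by linarith)).slope_anti_adjacent
      (Set.mem_Ici.mpr hx0) (Set.mem_Ici.mpr hz0) hxy hyz
    have hty : t k - t (k - 1) = (t j - t (k - 1)) - (t j - t k) := by ring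
    have htx : t (k + 1) - t k = (t j - t k) - (t j - t (k + 1)) := by ring
    rw [hty, htx]
    gcongr
  -- main induction: positivity and the summation identity
  have key : ∀ n m k, 1 ≤ k → k ≤ m → m ≤ M → m - k = n →
      0 < P m k ∧ ∑ j ∈ Finset.Icc k m, P m j * a j k = 1 := by
    intro n
    induction n using Nat.strong_induction_on with
    | _ n ih =>
      intro m k hk1 hkm hmM hn
      rcases eq_or_lt_of_le hkm with rfl | hlt
      · have hak := ha_pos k k hk1 le_rfl hmM
        have hPk := hP0 k hk1 hmM
        constructor
        · rw [hPk]; positivity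
        · rw [Finset.Icc_self, Finset.sum_singleton, hPk]
          field_simp
      · have hrec := hPrec m k hk1 (by omega) hmM
        have hak := ha_pos k k hk1 (by omega) (by omega)
        have hIH : ∀ j, k + 1 ≤ j → j ≤ m →
            0 < P m j ∧ ∑ i ∈ Finset.Icc j m, P m i * a i j = 1 := by
          intro j hj1 hj2
          exact ih (m - j) (by omega) m j (by omega) hj2 hmM rfl
        have hSpos : 0 < ∑ j ∈ Finset.Icc (k + 1) m, (a j (k + 1) - a j k) * P m j := by
          apply Finset.sum_pos
          · intro j hj
            rw [Finset.mem_Icc] at hj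
            have hmono := ha_mono j k hk1 hj.1 (le_trans hj.2 hmM)
            have hPj := (hIH j hj.1 hj.2).1
            exact mul_pos (by linarith) hPj
          · exact Finset.nonempty_Icc.mpr (by omega)
        have hPpos : 0 < P m k := by
          rw [hrec]
          exact mul_pos (by positivity) hSpos
        refine ⟨hPpos, ?_⟩
        have hsplit : Finset.Icc k m = insert k (Finset.Icc (k + 1) m) := by
          ext x; simp only [Finset.mem_Icc, Finset.mem_insert]; omega
        have hnot : k ∉ Finset.Icc (k + 1) m := by simp
        rw [hsplit, Finset.sum_insert hnot]
        have hPa : P m k * a k k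
            = ∑ j ∈ Finset.Icc (k + 1) m, (a j (k + 1) - a j k) * P m j := by
          rw [hrec]; field_simp
        rw [hPa, ← Finset.sum_add_distrib]
        have : ∀ j ∈ Finset.Icc (k + 1) m,
            (a j (k + 1) - a j k) * P m j + P m j * a j k = P m j * a j (k + 1) := by
          intro j _; ring
        rw [Finset.sum_congr rfl this]
        exact (hIH (k + 1) le_rfl (by omega)).2
  -- conclusion
  intro m k hk1 hkm hmM
  obtain ⟨hPpos, hid⟩ := key (m - k) m k hk1 hkm hmM rfl
  refine ⟨hPpos, ?_⟩
  have hak := ha_pos k k hk1 le_rfl (le_trans hkm hmM)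
  -- the sum over `Icc (k+1) m` is nonnegative
  have hsplit : Finset.Icc k m = insert k (Finset.Icc (k + 1) m) := by
    ext x; simp only [Finset.mem_Icc, Finset.mem_insert]; omega
  have hnot : k ∉ Finset.Icc (k + 1) m := by simp
  rw [hsplit, Finset.sum_insert hnot] at hid
  have hrest : 0 ≤ ∑ j ∈ Finset.Icc (k + 1) m, P m j * a j k := by
    apply Finset.sum_nonneg
    intro j hj
    rw [Finset.mem_Icc] at hj
    have hPj := (key (m - j) m j (by omega) hj.2 hmM rfl).1
    have haj := ha_pos j k hk1 (by omega) (le_trans hj.2 hmM)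
    positivity
  have hPA : P m k * a k k ≤ 1 := by linarith
  -- compute `a k k`
  have hτ := hτpos k hk1 (le_trans hkm hmM)
  have hakk : a k k = (t k - t (k - 1)) ^ (-α) / Real.Gamma (2 - α) := by
    rw [ha_eq k k hk1 le_rfl (le_trans hkm hmM)]
    rw [sub_self, Real.zero_rpow (by linarith), sub_zero]
    rw [show (t k - t (k - 1)) ^ (-α) = (t k - t (k - 1)) ^ ((1 - α) - 1) by norm_num,
      Real.rpow_sub_one hτ.ne']
  have hbound : Real.Gamma (2 - α) * (t k - t (k - 1)) ^ α = 1 / a k k := by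
    rw [hakk, Real.rpow_neg hτ.le]
    have hτα : (0:ℝ) < (t k - t (k - 1)) ^ α := Real.rpow_pos_of_pos hτ α
    field_simp
  rw [hbound]
  rw [le_div_iff₀ hak]
  exact hPA
end

section
/- Let $\{\rho^m\}_{m=0}^{M}$ be real numbers with $\rho^0 = 0$ satisfying the discrete relation $D_M^{\alpha}\rho^m + \lambda \rho^m = R^m$ for $1 \leq m \leq M$, where $\lambda \geq 0$ and $D_M^{\alpha}\rho^m = \sum_{k=1}^{m} a^{(m)}_{m-k}(\rho^k - \rho^{k-1})$. Then for every $1 \leq m_0 \leq M$, $|\rho^{m_0}| \leq 2 \sum_{m=1}^{\bar m} P^{(\bar m)}_{\bar m - m} |R^m|$, where $\bar m \leq m_0$ is an index maximizing $|\rho^m|$ over $1 \leq m \leq m_0$. -/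
lemma telescope_Icc (g : ℕ → ℝ) : ∀ n : ℕ,
    ∑ k ∈ Finset.Icc 1 n, (g k - g (k - 1)) = g n - g 0 := by
  intro n
  induction n with
  | zero => simp
  | succ n ih =>
    rw [Finset.sum_Icc_succ_top (by omega), ih]
    simp

/-- discrete stability of the nonuniform L1 scheme. If `ρ^0 = 0` and
`D_M^α ρ^m + lam ρ^m = R^m` with `lam ≥ 0`, where
`D_M^α ρ^m = ∑_{k=1}^m a^(m)_(m-k)(ρ^k - ρ^(k-1))`, then
`|ρ^(m0)| ≤ 2 ∑_{m=1}^{m̄} P^(m̄)_(m̄-m) |R^m|` where `m̄ ≤ m0` maximizes `|ρ^m|`.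
Here `a m k` denotes `a^(m)_(m-k)` and `P m k` denotes `P^(m)_(m-k)`. -/
theorem L1_discrete_stability (M : ℕ) (hM : 0 < M) (lam : ℝ) (hlam : 0 ≤ lam)
    (a P : ℕ → ℕ → ℝ) (ρ R : ℕ → ℝ)
    (ha_pos : ∀ m k, 1 ≤ k → k ≤ m → m ≤ M → 0 < a m k)
    (ha_mono : ∀ j k, 1 ≤ k → k + 1 ≤ j → j ≤ M → a j k ≤ a j (k + 1))
    (hP_pos : ∀ m k, 1 ≤ k → k ≤ m → m ≤ M → 0 < P m k)
    (hP_id : ∀ m k, 1 ≤ k → k ≤ m → m ≤ M →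
      ∑ j ∈ Finset.Icc k m, P m j * a j k = 1)
    (hcoer : ∀ m, 1 ≤ m → m ≤ M →
      2 * ρ m * (∑ k ∈ Finset.Icc 1 m, a m k * (ρ k - ρ (k - 1)))
        ≥ ∑ k ∈ Finset.Icc 1 m, a m k * ((ρ k) ^ 2 - (ρ (k - 1)) ^ 2))
    (hρ0 : ρ 0 = 0)
    (heq : ∀ m, 1 ≤ m → m ≤ M →
      (∑ k ∈ Finset.Icc 1 m, a m k * (ρ k - ρ (k - 1))) + lam * ρ m = R m) :
    ∀ m₀, 1 ≤ m₀ → m₀ ≤ M →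
      ∀ mbar, 1 ≤ mbar → mbar ≤ m₀ →
        (∀ m, 1 ≤ m → m ≤ m₀ → |ρ m| ≤ |ρ mbar|) →
        |ρ m₀| ≤ 2 * ∑ m ∈ Finset.Icc 1 mbar, P mbar m * |R m| := by
  intro m₀ hm₀1 hm₀M mbar hmb1 hmb0 hmax
  set S := ∑ m ∈ Finset.Icc 1 mbar, P mbar m * |R m| with hS
  have hSnn : 0 ≤ S := by
    apply Finset.sum_nonneg
    intro m hm
    rw [Finset.mem_Icc] at hm
    exact mul_nonneg (le_of_lt (hP_pos mbar m hm.1 hm.2 (by omega))) (abs_nonneg _)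
  -- pointwise estimate
  have hA : ∀ m, 1 ≤ m → m ≤ mbar →
      ∑ k ∈ Finset.Icc 1 m, a m k * ((ρ k) ^ 2 - (ρ (k - 1)) ^ 2)
        ≤ 2 * |ρ mbar| * |R m| := by
    intro m h1 h2
    have hmM : m ≤ M := by omega
    have hc := hcoer m h1 hmM
    have he := heq m h1 hmM
    have hD : (∑ k ∈ Finset.Icc 1 m, a m k * (ρ k - ρ (k - 1))) = R m - lam * ρ m := by
      linarith
    rw [hD] at hc
    have h1' : ρ m * R m ≤ |ρ mbar| * |R m| := by
      calc ρ m * R m ≤ |ρ m * R m| := le_abs_self _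
        _ = |ρ m| * |R m| := abs_mul _ _
        _ ≤ |ρ mbar| * |R m| :=
            mul_le_mul_of_nonneg_right (hmax m h1 (by omega)) (abs_nonneg _)
    nlinarith [sq_nonneg (ρ m)]
  -- multiply by P and sum
  have hsum : ∑ m ∈ Finset.Icc 1 mbar, P mbar m *
      (∑ k ∈ Finset.Icc 1 m, a m k * ((ρ k) ^ 2 - (ρ (k - 1)) ^ 2))
        ≤ 2 * |ρ mbar| * S := by
    rw [hS, Finset.mul_sum]
    apply Finset.sum_le_sum
    intro m hm
    rw [Finset.mem_Icc] at hm
    have := mul_le_mul_of_nonneg_left (hA m hm.1 hm.2)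
      (le_of_lt (hP_pos mbar m hm.1 hm.2 (by omega)))
    calc P mbar m * (∑ k ∈ Finset.Icc 1 m, a m k * ((ρ k) ^ 2 - (ρ (k - 1)) ^ 2))
        ≤ P mbar m * (2 * |ρ mbar| * |R m|) := this
      _ = 2 * |ρ mbar| * (P mbar m * |R m|) := by ring
  -- identify left side with (ρ mbar)^2
  have hLHS : ∑ m ∈ Finset.Icc 1 mbar, P mbar m *
      (∑ k ∈ Finset.Icc 1 m, a m k * ((ρ k) ^ 2 - (ρ (k - 1)) ^ 2))
        = (ρ mbar) ^ 2 := by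
    have hswap : ∑ m ∈ Finset.Icc 1 mbar, ∑ k ∈ Finset.Icc 1 m,
        P mbar m * (a m k * ((ρ k) ^ 2 - (ρ (k - 1)) ^ 2))
        = ∑ k ∈ Finset.Icc 1 mbar, ∑ m ∈ Finset.Icc k mbar,
          P mbar m * (a m k * ((ρ k) ^ 2 - (ρ (k - 1)) ^ 2)) := by
      apply Finset.sum_comm'
      intro m k
      simp only [Finset.mem_Icc]
      omega
    calc ∑ m ∈ Finset.Icc 1 mbar, P mbar m *
          (∑ k ∈ Finset.Icc 1 m, a m k * ((ρ k) ^ 2 - (ρ (k - 1)) ^ 2))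
        = ∑ m ∈ Finset.Icc 1 mbar, ∑ k ∈ Finset.Icc 1 m,
            P mbar m * (a m k * ((ρ k) ^ 2 - (ρ (k - 1)) ^ 2)) := by
          simp_rw [Finset.mul_sum]
      _ = ∑ k ∈ Finset.Icc 1 mbar, ∑ m ∈ Finset.Icc k mbar,
            P mbar m * (a m k * ((ρ k) ^ 2 - (ρ (k - 1)) ^ 2)) := hswap
      _ = ∑ k ∈ Finset.Icc 1 mbar,
            (∑ m ∈ Finset.Icc k mbar, P mbar m * a m k) *
              ((ρ k) ^ 2 - (ρ (k - 1)) ^ 2) := by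
          apply Finset.sum_congr rfl
          intro k hk
          rw [Finset.sum_mul]
          apply Finset.sum_congr rfl
          intro m hm
          ring
      _ = ∑ k ∈ Finset.Icc 1 mbar, ((ρ k) ^ 2 - (ρ (k - 1)) ^ 2) := by
          apply Finset.sum_congr rfl
          intro k hk
          rw [Finset.mem_Icc] at hk
          rw [hP_id mbar k hk.1 hk.2 (by omega), one_mul]
      _ = (ρ mbar) ^ 2 := by
          rw [telescope_Icc (fun k => (ρ k) ^ 2) mbar, hρ0]
          ring
  rw [hLHS] at hsum
  -- conclude
  have hρm₀ : |ρ m₀| ≤ |ρ mbar| := hmax m₀ hm₀1 le_rfl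
  rcases eq_or_lt_of_le (abs_nonneg (ρ mbar)) with h0 | h0
  · calc |ρ m₀| ≤ |ρ mbar| := hρm₀
      _ = 0 := h0.symm
      _ ≤ 2 * S := by linarith
  · have h2 : |ρ mbar| ^ 2 ≤ 2 * |ρ mbar| * S := by
      rwa [sq_abs]
    nlinarith
end

section
/- For real kernel weights $P^{(m_0)}_{m_0 - m} > 0$ satisfying the bound $\sum_{m=1}^{m_0} P^{(m_0)}_{m_0-m} \beta_{1-\alpha}(t_m) \leq \beta_1(t_{m_0})$ and truncation errors with $|R^m| \leq Q\, t_m^{n\alpha}\, m^{-\min\{2-\alpha,\,(n+1)r\alpha\}}$, one has $\sum_{m=1}^{m_0} P^{(m_0)}_{m_0-m} |R^m| \leq C\, \tau^{\min\{2-\alpha,\,(n+1)r\alpha\}}$ for $1 \leq m_0 \leq M$, where $C$ depends on $T, \alpha, n, r, Q$ but not on $\tau$ or $m_0$. -/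
/-- for positive kernel weights `P^(m0)_(m0-m)` satisfying
`∑_{m=1}^{m0} P^(m0)_(m0-m) β_(1-α)(t_m) ≤ β_1(t_(m0))` and truncation errors with
`|R^m| ≤ Q t_m^(nα) m^(-min{2-α,(n+1)rα})`, one has
`∑_{m=1}^{m0} P^(m0)_(m0-m) |R^m| ≤ C τ^(min{2-α,(n+1)rα})` with `C` independent of
`τ` and `m0`. The graded mesh is `t_m = (mτ)^r`, `τ = T^(1/r)/M`.
Here `P m0 m` denotes `P^(m0)_(m0-m)`. -/
theorem kernel_weighted_truncation_bound (α T Q r : ℝ) (hα : 0 < α) (hα1 : α < 1)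
    (hT : 0 < T) (hQ : 0 < Q) (hr : 1 ≤ r) (n : ℕ) :
    ∃ C : ℝ, 0 < C ∧ ∀ (M : ℕ), 1 ≤ M →
      ∀ (P : ℕ → ℕ → ℝ) (R : ℕ → ℝ),
        (∀ m₀ m, 1 ≤ m → m ≤ m₀ → m₀ ≤ M → 0 < P m₀ m) →
        (∀ m₀, 1 ≤ m₀ → m₀ ≤ M →
          ∑ m ∈ Finset.Icc 1 m₀,
              P m₀ m * betaKer (1 - α) (((m : ℝ) * (T ^ (1 / r) / M)) ^ r)
            ≤ betaKer 1 (((m₀ : ℝ) * (T ^ (1 / r) / M)) ^ r)) →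
        (∀ m, 1 ≤ m → m ≤ M →
          |R m| ≤ Q * (((m : ℝ) * (T ^ (1 / r) / M)) ^ r) ^ ((n : ℝ) * α) *
            (m : ℝ) ^ (-(min (2 - α) (((n : ℝ) + 1) * r * α)))) →
        ∀ m₀, 1 ≤ m₀ → m₀ ≤ M →
          ∑ m ∈ Finset.Icc 1 m₀, P m₀ m * |R m|
            ≤ C * (T ^ (1 / r) / M) ^ (min (2 - α) (((n : ℝ) + 1) * r * α)) := by
  have hrpos : 0 < r := lt_of_lt_of_le one_pos hr
  set μ := min (2 - α) (((n : ℝ) + 1) * r * α) with hμdef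
  set e := r * (n : ℝ) * α + r * α - μ with hedef
  have hμle : μ ≤ ((n : ℝ) + 1) * r * α := min_le_right _ _
  have hepos : 0 ≤ e := by
    have : ((n : ℝ) + 1) * r * α = r * (n : ℝ) * α + r * α := by ring
    rw [hedef]; linarith
  have hΓ : 0 < Real.Gamma (1 - α) := Real.Gamma_pos_of_pos (by linarith)
  have hTpow : 0 < T ^ (e / r) := Real.rpow_pos_of_pos hT _
  refine ⟨Q * Real.Gamma (1 - α) * T ^ (e / r), by positivity, ?_⟩
  intro M hM P R hP hPsum hR m₀ hm₀1 hm₀M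
  set τ := T ^ (1 / r) / (M : ℝ) with hτdef
  have hMpos : (0 : ℝ) < M := by exact_mod_cast hM
  have hτ : 0 < τ := div_pos (Real.rpow_pos_of_pos hT _) hMpos
  have hτμ : 0 < τ ^ μ := Real.rpow_pos_of_pos hτ _
  have key : ∀ m ∈ Finset.Icc 1 m₀, P m₀ m * |R m| ≤
      (Q * Real.Gamma (1 - α) * T ^ (e / r) * τ ^ μ) *
        (P m₀ m * betaKer (1 - α) (((m : ℝ) * τ) ^ r)) := by
    intro m hm
    rw [Finset.mem_Icc] at hm
    obtain ⟨hm1, hmm₀⟩ := hm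
    have hmM : m ≤ M := le_trans hmm₀ hm₀M
    have hmpos : (0 : ℝ) < m := by exact_mod_cast hm1
    have hx : (0 : ℝ) < (m : ℝ) * τ := mul_pos hmpos hτ
    set x := (m : ℝ) * τ with hxdef
    have hxT : x ≤ T ^ (1 / r) := by
      have hmle : (m : ℝ) ≤ M := by exact_mod_cast hmM
      have h := mul_le_mul_of_nonneg_right hmle hτ.le
      rw [hτdef, mul_div_cancel₀ _ hMpos.ne'] at h
      exact h
    have hRm := hR m hm1 hmM
    have hPm := (hP m₀ m hm1 hmm₀ hm₀M).le
    -- pointwise inequality on the error bound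
    have hbeta : Real.Gamma (1 - α) * betaKer (1 - α) (x ^ r) = (x ^ r) ^ (-α) := by
      rw [betaKer]
      rw [mul_div_cancel₀]
      · norm_num
      · exact hΓ.ne'
    have hA : (x ^ r) ^ ((n : ℝ) * α) = x ^ (r * ((n : ℝ) * α)) :=
      (Real.rpow_mul hx.le _ _).symm
    have hB : (m : ℝ) ^ (-μ) = x ^ (-μ) * τ ^ μ := by
      have h1 : x ^ (-μ) = (m : ℝ) ^ (-μ) * τ ^ (-μ) :=
        Real.mul_rpow hmpos.le hτ.le
      rw [h1, mul_assoc, ← Real.rpow_add hτ]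
      norm_num
    have hC : (x ^ r) ^ (-α) = x ^ (-(r * α)) := by
      rw [← Real.rpow_mul hx.le]
      ring_nf
    have hxe : x ^ e ≤ T ^ (e / r) := by
      calc x ^ e ≤ (T ^ (1 / r)) ^ e :=
            Real.rpow_le_rpow hx.le hxT hepos
        _ = T ^ (e / r) := by
            rw [← Real.rpow_mul hT.le]
            ring_nf
    have hsplit : x ^ (r * ((n : ℝ) * α)) * x ^ (-μ) = x ^ e * x ^ (-(r * α)) := by
      rw [← Real.rpow_add hx, ← Real.rpow_add hx]
      congr 1
      rw [hedef]; ring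
    have hmain : (x ^ r) ^ ((n : ℝ) * α) * (m : ℝ) ^ (-μ)
        ≤ T ^ (e / r) * τ ^ μ * (x ^ r) ^ (-α) := by
      rw [hA, hB, hC]
      have : x ^ (r * ((n : ℝ) * α)) * (x ^ (-μ) * τ ^ μ)
          = x ^ e * (x ^ (-(r * α)) * τ ^ μ) := by
        rw [← mul_assoc, hsplit]; ring
      rw [this]
      have h2 : x ^ e * (x ^ (-(r * α)) * τ ^ μ)
          ≤ T ^ (e / r) * (x ^ (-(r * α)) * τ ^ μ) := by
        apply mul_le_mul_of_nonneg_right hxe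
        positivity
      calc x ^ e * (x ^ (-(r * α)) * τ ^ μ)
          ≤ T ^ (e / r) * (x ^ (-(r * α)) * τ ^ μ) := h2
        _ = T ^ (e / r) * τ ^ μ * x ^ (-(r * α)) := by ring
    have hRm' : |R m| ≤ Q * Real.Gamma (1 - α) * T ^ (e / r) * τ ^ μ *
        betaKer (1 - α) (x ^ r) := by
      have h3 : Q * ((x ^ r) ^ ((n : ℝ) * α) * (m : ℝ) ^ (-μ))
          ≤ Q * (T ^ (e / r) * τ ^ μ * (x ^ r) ^ (-α)) :=
        mul_le_mul_of_nonneg_left hmain hQ.le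
      calc |R m| ≤ Q * (x ^ r) ^ ((n : ℝ) * α) * (m : ℝ) ^ (-μ) := hRm
        _ = Q * ((x ^ r) ^ ((n : ℝ) * α) * (m : ℝ) ^ (-μ)) := by ring
        _ ≤ Q * (T ^ (e / r) * τ ^ μ * (x ^ r) ^ (-α)) := h3
        _ = Q * Real.Gamma (1 - α) * T ^ (e / r) * τ ^ μ *
              betaKer (1 - α) (x ^ r) := by
            rw [← hbeta]; ring
    calc P m₀ m * |R m|
        ≤ P m₀ m * (Q * Real.Gamma (1 - α) * T ^ (e / r) * τ ^ μ *
            betaKer (1 - α) (x ^ r)) := mul_le_mul_of_nonneg_left hRm' hPm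
      _ = (Q * Real.Gamma (1 - α) * T ^ (e / r) * τ ^ μ) *
            (P m₀ m * betaKer (1 - α) (x ^ r)) := by ring
  have hbeta1 : betaKer 1 (((m₀ : ℝ) * τ) ^ r) = 1 := by
    rw [betaKer, Real.Gamma_one]
    norm_num
  have hsum := hPsum m₀ hm₀1 hm₀M
  rw [hbeta1] at hsum
  have hK : 0 ≤ Q * Real.Gamma (1 - α) * T ^ (e / r) * τ ^ μ := by positivity
  calc ∑ m ∈ Finset.Icc 1 m₀, P m₀ m * |R m|
      ≤ ∑ m ∈ Finset.Icc 1 m₀, (Q * Real.Gamma (1 - α) * T ^ (e / r) * τ ^ μ) *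
          (P m₀ m * betaKer (1 - α) (((m : ℝ) * τ) ^ r)) := Finset.sum_le_sum key
    _ = (Q * Real.Gamma (1 - α) * T ^ (e / r) * τ ^ μ) *
          ∑ m ∈ Finset.Icc 1 m₀, P m₀ m * betaKer (1 - α) (((m : ℝ) * τ) ^ r) := by
        rw [Finset.mul_sum]
    _ ≤ (Q * Real.Gamma (1 - α) * T ^ (e / r) * τ ^ μ) * 1 :=
        mul_le_mul_of_nonneg_left hsum hK
    _ = Q * Real.Gamma (1 - α) * T ^ (e / r) * τ ^ μ := by ring
end
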